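/- arXiv:2512.04409 — 6 statements merged into one kernel-verified Lean document; each statement's English description precedes it below -/
import Mathlib

section
/- Let G be a connected simple graph on a finite vertex set V with at least two vertices, and let i ∈ V. Define P_i as the set of unordered pairs {j,k} of distinct neighbors of i such that either (G.dist i k = G.dist j k and G.dist i j = G.dist k j), or there exists p ∈ V with p ∉ {i} ∪ N(i), G.dist j p ≤ G.dist i p, and G.dist k p ≤ G.dist i p. Then the induced subgraph of G on V \ {i} is connected if and only if there exists a set Q ⊆ P_i of unordered pairs of neighbors of i such that every two neighbors j, k ∈ N(i) are related by the reflexive–transitive closure of the symmetric relation {(a,b) : {a,b} ∈ Q}. -/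
open SimpleGraph

/-- Theorem 2 (distributed AP identification criterion): in a connected graph on at
least two vertices, node `i` is not an articulation point (i.e., the induced subgraph
on `V \ {i}` is connected) iff there is a set `Q` of unordered pairs of distinct
neighbors of `i`, each pair satisfying the membership condition of `P_i`, whose
reflexive–transitive closure relates every two neighbors of `i`. -/
theorem ap_identification_criterion {V : Type*} [Fintype V] [DecidableEq V]
    (G : SimpleGraph V) (hG : G.Connected) (hV : 1 < Fintype.card V) (i : V) :
    (G.induce {v : V | v ≠ i}).Connected ↔
      ∃ Q : Set (Sym2 V),
        (∀ e ∈ Q, ∃ j k : V, e = s(j, k) ∧ j ≠ k ∧ G.Adj i j ∧ G.Adj i k ∧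
            ((G.dist i k = G.dist j k ∧ G.dist i j = G.dist k j) ∨
              ∃ p : V, p ≠ i ∧ ¬ G.Adj i p ∧
                G.dist j p ≤ G.dist i p ∧ G.dist k p ≤ G.dist i p)) ∧
        (∀ j k : V, G.Adj i j → G.Adj i k →
          Relation.ReflTransGen (fun a b => s(a, b) ∈ Q) j k) := by
  classical
  set H := G.induce {v : V | v ≠ i} with hHdef
  -- a walk in `G` avoiding `i` gives reachability in `H`
  have walk2H : ∀ {u v : V} (W : G.Walk u v), i ∉ W.support →
      ∀ (hu : u ≠ i) (hv : v ≠ i), H.Reachable ⟨u, hu⟩ ⟨v, hv⟩ := by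
    intro u v W
    induction W with
    | nil => intro _ hu hv; exact Reachable.refl _
    | @cons u x v h W ih =>
      intro hs hu hv
      rw [Walk.support_cons, List.mem_cons] at hs
      push_neg at hs
      have hx : x ≠ i := fun hxi => hs.2 (hxi ▸ W.start_mem_support)
      have hadj : H.Adj ⟨u, hu⟩ ⟨x, hx⟩ := h
      exact hadj.reachable.trans (ih hs.2 hx hv)
  -- if the shortest distance beats any route through `i`, we can avoid `i`
  have avoid : ∀ (u v : V) (hu : u ≠ i) (hv : v ≠ i),
      G.dist u v < G.dist u i + G.dist i v → H.Reachable ⟨u, hu⟩ ⟨v, hv⟩ := by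
    intro u v hu hv hlt
    obtain ⟨W, hW⟩ := hG.exists_walk_length_eq_dist u v
    by_cases hi : i ∈ W.support
    · exfalso
      have h1 : G.dist u i ≤ (W.takeUntil i hi).length := dist_le _
      have h2 : G.dist i v ≤ (W.dropUntil i hi).length := dist_le _
      have h3 := congrArg Walk.length (W.take_spec hi)
      rw [Walk.length_append] at h3
      omega
    · exact walk2H W hi hu hv
  -- every vertex other than `i` is H-reachable from some neighbor of `i`
  have nbr : ∀ (u : V) (hu : u ≠ i), ∃ (w : V) (hw : G.Adj i w),
      H.Reachable ⟨w, hw.ne'⟩ ⟨u, hu⟩ := by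
    intro u hu
    obtain ⟨W⟩ := hG.preconnected i u
    obtain ⟨x, hadj, W', hW'⟩ := Walk.exists_eq_cons_of_ne (Ne.symm hu) W.bypass
    have hp : W.bypass.IsPath := W.bypass_isPath
    rw [hW', Walk.cons_isPath_iff] at hp
    have hx : x ≠ i := fun hxi => hp.2 (hxi ▸ W'.start_mem_support)
    exact ⟨x, hadj, walk2H W' hp.2 hx hu⟩
  -- a vertex on a shortest path from `i`
  have parent : ∀ (p : V), p ≠ i → ∃ w, G.Adj i w ∧ G.dist w p + 1 = G.dist i p := by
    intro p hp
    have hd0 : G.dist i p ≠ 0 := (hG.pos_dist_of_ne (Ne.symm hp)).ne'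
    obtain ⟨W, hW⟩ := exists_walk_of_dist_ne_zero hd0
    obtain ⟨x, hadj, W', hW'⟩ := Walk.exists_eq_cons_of_ne (Ne.symm hp) W
    have h1 : G.dist x p ≤ W'.length := dist_le W'
    have h2 : G.dist i p ≤ G.dist i x + G.dist x p := hG.dist_triangle
    have h3 : G.dist i x = 1 := dist_eq_one_iff_adj.mpr hadj
    have h4 : W.length = W'.length + 1 := by rw [hW', Walk.length_cons]
    exact ⟨x, hadj, by omega⟩
  constructor
  · -- forward direction
    intro hcon
    refine ⟨{e | ∃ j k : V, e = s(j, k) ∧ j ≠ k ∧ G.Adj i j ∧ G.Adj i k ∧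
            ((G.dist i k = G.dist j k ∧ G.dist i j = G.dist k j) ∨
              ∃ p : V, p ≠ i ∧ ¬ G.Adj i p ∧
                G.dist j p ≤ G.dist i p ∧ G.dist k p ≤ G.dist i p)},
      fun e he => he, ?_⟩
    set Q : Set (Sym2 V) := {e | ∃ j k : V, e = s(j, k) ∧ j ≠ k ∧ G.Adj i j ∧ G.Adj i k ∧
            ((G.dist i k = G.dist j k ∧ G.dist i j = G.dist k j) ∨
              ∃ p : V, p ≠ i ∧ ¬ G.Adj i p ∧
                G.dist j p ≤ G.dist i p ∧ G.dist k p ≤ G.dist i p)} with hQdef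
    set Rel : V → V → Prop := fun a b => s(a, b) ∈ Q with hReldef
    set C : V → V → Prop := fun v a =>
      (G.Adj i v ∧ a = v) ∨ (¬ G.Adj i v ∧ G.Adj i a ∧ G.dist a v ≤ G.dist i v)
      with hCdef
    -- two members of the same class are related
    have within : ∀ (v : V), v ≠ i → ∀ a b, C v a → C v b →
        Relation.ReflTransGen Rel a b := by
      intro v hv a b ha hb
      rcases ha with ⟨hva, rfl⟩ | ⟨hnv, hia, hda⟩
      · rcases hb with ⟨_, rfl⟩ | ⟨hnv, _, _⟩
        · exact Relation.ReflTransGen.refl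
        · exact absurd hva hnv
      · rcases hb with ⟨hv2, rfl⟩ | ⟨_, hib, hdb⟩
        · exact absurd hv2 hnv
        · by_cases hab : a = b
          · subst hab; exact Relation.ReflTransGen.refl
          · exact Relation.ReflTransGen.single
              ⟨a, b, rfl, hab, hia, hib, Or.inr ⟨v, hv, hnv, hda, hdb⟩⟩
    -- moving along an edge of `H`
    have step : ∀ (v v' : V), v ≠ i → v' ≠ i → G.Adj v v' → ∀ a, C v a →
        ∃ a', C v' a' ∧ Relation.ReflTransGen Rel a a' := by
      intro v v' hv hv' hadj a ha
      have hd1 : G.dist v v' = 1 := dist_eq_one_iff_adj.mpr hadj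
      have hd1' : G.dist v' v = 1 := dist_eq_one_iff_adj.mpr hadj.symm
      by_cases h1 : G.Adj i v <;> by_cases h2 : G.Adj i v'
      · rcases ha with ⟨-, hav⟩ | ⟨hn, -⟩
        · refine ⟨v', Or.inl ⟨h2, rfl⟩, Relation.ReflTransGen.single ?_⟩
          subst hav
          refine ⟨a, v', rfl, hadj.ne, h1, h2, Or.inl ⟨?_, ?_⟩⟩
          · rw [dist_eq_one_iff_adj.mpr h2, hd1]
          · rw [dist_eq_one_iff_adj.mpr h1, hd1']
        · exact absurd h1 hn
      · rcases ha with ⟨-, hav⟩ | ⟨hn, -⟩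
        · subst hav
          refine ⟨a, Or.inr ⟨h2, h1, ?_⟩, Relation.ReflTransGen.refl⟩
          have : 0 < G.dist i v' := hG.pos_dist_of_ne (Ne.symm hv')
          omega
        · exact absurd h1 hn
      · refine ⟨v', Or.inl ⟨h2, rfl⟩, ?_⟩
        apply within v hv a v' ha
        refine Or.inr ⟨h1, h2, ?_⟩
        have : 0 < G.dist i v := hG.pos_dist_of_ne (Ne.symm hv)
        omega
      · rcases le_total (G.dist i v') (G.dist i v) with hle | hle
        · obtain ⟨w, hw, hwd⟩ := parent v' hv'
          have ht : G.dist w v ≤ G.dist w v' + G.dist v' v := hG.dist_triangle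
          refine ⟨w, Or.inr ⟨h2, hw, ?_⟩, within v hv a w ha (Or.inr ⟨h1, hw, ?_⟩)⟩
          · omega
          · omega
        · obtain ⟨w, hw, hwd⟩ := parent v hv
          have ht : G.dist w v' ≤ G.dist w v + G.dist v v' := hG.dist_triangle
          refine ⟨w, Or.inr ⟨h2, hw, ?_⟩, within v hv a w ha (Or.inr ⟨h1, hw, ?_⟩)⟩
          · omega
          · omega
    -- main induction along a walk in `H`
    have main : ∀ (x y : {v : V // v ≠ i}) (W : H.Walk x y) (a b : V),
        C x.1 a → C y.1 b → Relation.ReflTransGen Rel a b := by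
      intro x y W
      induction W with
      | @nil x =>
        intro a b ha hb
        exact within x.1 x.2 a b ha hb
      | @cons x z y h W ih =>
        intro a b ha hb
        have hGadj : G.Adj x.1 z.1 := h
        obtain ⟨a', ha', hrel⟩ := step x.1 z.1 x.2 z.2 hGadj a ha
        exact hrel.trans (ih a' b ha' hb)
    intro j k hj hk
    obtain ⟨W⟩ := hcon.preconnected ⟨j, hj.ne'⟩ ⟨k, hk.ne'⟩
    exact main _ _ W j k (Or.inl ⟨hj, rfl⟩) (Or.inl ⟨hk, rfl⟩)
  · -- backward direction
    rintro ⟨Q, hQ1, hQ2⟩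
    set Rch : V → V → Prop := fun a b =>
      ∀ (ha : a ≠ i) (hb : b ≠ i), H.Reachable ⟨a, ha⟩ ⟨b, hb⟩ with hRchdef
    have base : ∀ j k : V, G.Adj i j → G.Adj i k →
        ((G.dist i k = G.dist j k ∧ G.dist i j = G.dist k j) ∨
          ∃ p : V, p ≠ i ∧ ¬ G.Adj i p ∧
            G.dist j p ≤ G.dist i p ∧ G.dist k p ≤ G.dist i p) → Rch j k := by
      intro j k hij hik hcond ha hb
      rcases hcond with ⟨e1, _⟩ | ⟨p, hpi, hpadj, hjp, hkp⟩
      · rw [dist_eq_one_iff_adj.mpr hik] at e1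
        have hjk : G.Adj j k := dist_eq_one_iff_adj.mp e1.symm
        exact (show H.Adj ⟨j, ha⟩ ⟨k, hb⟩ from hjk).reachable
      · have hdj : G.dist j i = 1 := dist_eq_one_iff_adj.mpr hij.symm
        have hdk : G.dist k i = 1 := dist_eq_one_iff_adj.mpr hik.symm
        have r1 : H.Reachable ⟨j, ha⟩ ⟨p, hpi⟩ := avoid j p ha hpi (by omega)
        have r2 : H.Reachable ⟨k, hb⟩ ⟨p, hpi⟩ := avoid k p hb hpi (by omega)
        exact r1.trans r2.symm
    have pairR : ∀ a b : V, s(a, b) ∈ Q → G.Adj i a ∧ G.Adj i b ∧ Rch a b := by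
      intro a b hab
      obtain ⟨j, k, he, hjk, hij, hik, hcond⟩ := hQ1 _ hab
      rw [Sym2.eq_iff] at he
      rcases he with ⟨rfl, rfl⟩ | ⟨rfl, rfl⟩
      · exact ⟨hij, hik, base _ _ hij hik hcond⟩
      · exact ⟨hik, hij, fun ha hb => (base _ _ hij hik hcond hb ha).symm⟩
    have chain : ∀ a b : V, Relation.ReflTransGen (fun a b => s(a, b) ∈ Q) a b →
        a = b ∨ (G.Adj i b ∧ Rch a b) := by
      intro a b h
      induction h with
      | refl => exact Or.inl rfl
      | @tail b c hab hbc ih =>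
        obtain ⟨h1, h2, h3⟩ := pairR _ _ hbc
        right
        refine ⟨h2, ?_⟩
        rcases ih with rfl | ⟨h4, h5⟩
        · exact h3
        · exact fun ha hb => (h5 ha h1.ne').trans (h3 h1.ne' hb)
    rw [connected_iff]
    constructor
    · rintro ⟨u, hu⟩ ⟨v, hv⟩
      obtain ⟨wu, hwu, hru⟩ := nbr u hu
      obtain ⟨wv, hwv, hrv⟩ := nbr v hv
      have h := chain wu wv (hQ2 wu wv hwu hwv)
      rcases h with rfl | ⟨_, hrch⟩
      · exact hru.symm.trans hrv
      · exact hru.symm.trans ((hrch hwu.ne' hwv.ne').trans hrv)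
    · have : Nontrivial V := Fintype.one_lt_card_iff_nontrivial.mp hV
      obtain ⟨v, hv⟩ := exists_ne i
      exact ⟨⟨v, hv⟩⟩
end

section
/- Let G be a simple graph on a finite vertex set V and fix a destination k ∈ V. Define x : ℕ → V → Bool by x 0 i = true iff i = k, and x (t+1) i = the Boolean OR of x t j over all j in {i} ∪ N(i). Define d : ℕ → V → ℕ∞ by d 0 i = 0 if i = k and ⊤ otherwise, and d (t+1) i = d t i if x (t+1) i = x t i, and d (t+1) i = 1 + (the infimum of d t j over j ∈ N(i)) if x (t+1) i ≠ x t i. Then for every t ∈ ℕ and every i ∈ V: if i is reachable from k in G and G.dist i k ≤ t then d t i = G.dist i k (as an element of ℕ∞), and otherwise d t i = ⊤. -/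
/-!
Round `t` of the max-consensus iteration spreads the flag of `k` by one neighbourhood, so
`x t i` says exactly whether `edist i k ≤ t`, and the flag at `i` flips in round `edist i k`
and only then. In that round every neighbour of `i` holds its distance to `k` truncated at
`t` (`⊤` beyond), whose minimum is `t` since `edist i k = 1 + min_{j ~ i} edist j k`; hence
`d t i = truncEdist t i k`, the distance truncated at `t`.
-/

open SimpleGraph

theorem Finset.sup_eq_true_iff {α : Type*} (s : Finset α) (f : α → Bool) :
    s.sup f = true ↔ ∃ a ∈ s, f a = true := by
  simpa using (Finset.sup_eq_bot_iff f s).not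

theorem ENat.le_add_one_iff_of_ne {e : ℕ∞} {n : ℕ} (hne : e ≠ n + 1) : e ≤ n + 1 ↔ e ≤ n :=
  ⟨fun hle => (ENat.lt_add_one_iff (ENat.natCast_ne_top n)).mp (lt_of_le_of_ne hle hne),
    fun hle => hle.trans le_self_add⟩

namespace SimpleGraph

variable {V : Type*} {G : SimpleGraph V} {i j k : V} {n : ℕ}

theorem reachable_and_dist_le_iff_edist_le :
    G.Reachable i k ∧ G.dist i k ≤ n ↔ G.edist i k ≤ n := by
  constructor
  · rintro ⟨hr, hle⟩
    rw [← hr.coe_dist_eq_edist]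
    exact_mod_cast hle
  · intro hle
    have hr : G.Reachable i k := reachable_of_edist_ne_top (ne_top_of_le_ne_top (by simp) hle)
    rw [← hr.coe_dist_eq_edist] at hle
    exact ⟨hr, by exact_mod_cast hle⟩

theorem Adj.edist_le_edist_add_one (h : G.Adj i j) : G.edist i k ≤ G.edist j k + 1 :=
  calc G.edist i k ≤ G.edist i j + G.edist j k := G.edist_triangle
    _ = G.edist j k + 1 := by rw [edist_eq_one_iff_adj.mpr h, add_comm]

theorem Adj.le_edist_of_edist_eq_add_one (hadj : G.Adj i j) (h : G.edist i k = n + 1) :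
    n ≤ G.edist j k := by
  have := hadj.edist_le_edist_add_one (k := k)
  rwa [h, ENat.add_le_add_iff_right ENat.one_ne_top] at this

theorem exists_adj_edist_eq_of_edist_eq_add_one (h : G.edist i k = n + 1) :
    ∃ j, G.Adj i j ∧ G.edist j k = n := by
  obtain ⟨p, hp⟩ := exists_walk_of_edist_eq_coe (k := n + 1) (by exact_mod_cast h)
  cases p with
  | nil => simp at hp
  | @cons _ j _ hadj q =>
    refine ⟨j, hadj, le_antisymm ?_ (hadj.le_edist_of_edist_eq_add_one h)⟩
    simpa [Walk.length_cons, show q.length = n by simpa using hp] using G.edist_le q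

theorem edist_le_add_one_iff :
    G.edist i k ≤ n + 1 ↔ ∃ j, (j = i ∨ G.Adj i j) ∧ G.edist j k ≤ n := by
  constructor
  · intro hle
    by_cases hn : G.edist i k = n + 1
    · obtain ⟨j, hadj, hj⟩ := exists_adj_edist_eq_of_edist_eq_add_one hn
      exact ⟨j, .inr hadj, hj.le⟩
    · exact ⟨i, .inl rfl, (ENat.le_add_one_iff_of_ne hn).mp hle⟩
  · rintro ⟨j, rfl | hadj, hj⟩
    · exact hj.trans le_self_add
    · exact hadj.edist_le_edist_add_one.trans (by gcongr)

noncomputable def truncEdist (G : SimpleGraph V) (n : ℕ) (i k : V) : ℕ∞ :=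
  if G.edist i k ≤ n then G.edist i k else ⊤

theorem edist_le_truncEdist : G.edist i k ≤ G.truncEdist n i k := by
  unfold truncEdist
  split_ifs <;> simp

theorem truncEdist_add_one_of_edist_ne (h : G.edist i k ≠ n + 1) :
    G.truncEdist (n + 1) i k = G.truncEdist n i k := by
  simp only [truncEdist, Nat.cast_add_one, ENat.le_add_one_iff_of_ne h]

theorem inf_truncEdist_neighborFinset [Fintype (G.neighborSet i)]
    (h : G.edist i k = n + 1) :
    (G.neighborFinset i).inf (fun j => G.truncEdist n j k) = n := by
  apply le_antisymm
  · obtain ⟨j, hadj, hj⟩ := exists_adj_edist_eq_of_edist_eq_add_one h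
    calc (G.neighborFinset i).inf (fun j => G.truncEdist n j k) ≤ G.truncEdist n j k :=
          Finset.inf_le ((G.mem_neighborFinset i j).mpr hadj)
      _ = n := by simp [truncEdist, hj]
  · refine Finset.le_inf fun j hj => le_trans ?_ edist_le_truncEdist
    exact ((G.mem_neighborFinset i j).mp hj).le_edist_of_edist_eq_add_one h

variable [Fintype V] [DecidableEq V] [DecidableRel G.Adj]

theorem maxConsensus_eq_decide_edist_le {x : ℕ → V → Bool}
    (hx0 : ∀ i : V, x 0 i = if i = k then true else false)
    (hxstep : ∀ (t : ℕ) (i : V), x (t + 1) i = (insert i (G.neighborFinset i)).sup (x t))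
    (t : ℕ) (i : V) : x t i = decide (G.edist i k ≤ t) := by
  induction t generalizing i with
  | zero => simp [hx0, edist_eq_zero_iff]
  | succ t ih =>
    rw [hxstep, Bool.eq_iff_iff, Finset.sup_eq_true_iff, decide_eq_true_iff, Nat.cast_succ,
      edist_le_add_one_iff]
    simp [ih, or_and_right, eq_comm]

theorem distEstimate_eq_truncEdist {x : ℕ → V → Bool} {d : ℕ → V → ℕ∞}
    (hx : ∀ (t : ℕ) (i : V), x t i = decide (G.edist i k ≤ t))
    (hd0 : ∀ i : V, d 0 i = if i = k then 0 else ⊤)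
    (hdstep : ∀ (t : ℕ) (i : V),
      d (t + 1) i = if x (t + 1) i = x t i then d t i else 1 + (G.neighborFinset i).inf (d t))
    (t : ℕ) (i : V) : d t i = G.truncEdist t i k := by
  induction t generalizing i with
  | zero => by_cases h : i = k <;> simp [hd0, truncEdist, edist_eq_zero_iff, h]
  | succ t ih =>
    rw [hdstep, hx, hx]
    by_cases h : G.edist i k = t + 1
    · have hinf : (G.neighborFinset i).inf (d t) = t := by
        rw [show d t = fun j => G.truncEdist t j k from funext ih]
        exact inf_truncEdist_neighborFinset h
      rw [if_neg (by simp [h, ENat.lt_add_one_iff]), hinf, truncEdist, if_pos (by simp [h]), h,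
        add_comm]
    · rw [if_pos (by simp [ENat.le_add_one_iff_of_ne h]), ih, truncEdist_add_one_of_edist_ne h]

end SimpleGraph

/-- Distance estimation protocol coupled to the max-consensus reachability
iteration on a static network: after `t` iterations, node `i`'s distance estimate
for destination `k` equals the true shortest-path distance if `i` reaches `k`
within distance `t`, and equals `⊤` otherwise. -/
theorem distance_estimation_protocol {V : Type*} [Fintype V] [DecidableEq V]
    (G : SimpleGraph V) [DecidableRel G.Adj] (k : V)
    (x : ℕ → V → Bool) (d : ℕ → V → ℕ∞)
    (hx0 : ∀ i : V, x 0 i = if i = k then true else false)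
    (hxstep : ∀ (t : ℕ) (i : V),
      x (t + 1) i = (insert i (G.neighborFinset i)).sup (x t))
    (hd0 : ∀ i : V, d 0 i = if i = k then 0 else ⊤)
    (hdstep : ∀ (t : ℕ) (i : V),
      d (t + 1) i =
        if x (t + 1) i = x t i then d t i
        else 1 + (G.neighborFinset i).inf (d t)) :
    ∀ (t : ℕ) (i : V),
      (G.Reachable i k ∧ G.dist i k ≤ t → d t i = (G.dist i k : ℕ∞)) ∧
      (¬ (G.Reachable i k ∧ G.dist i k ≤ t) → d t i = ⊤) := by
  have hd := distEstimate_eq_truncEdist (maxConsensus_eq_decide_edist_le hx0 hxstep) hd0 hdstep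
  intro t i
  rw [hd, truncEdist]
  refine ⟨fun h => ?_, fun h => ?_⟩
  · rw [if_pos (reachable_and_dist_le_iff_edist_le.mp h), h.1.coe_dist_eq_edist]
  · rw [if_neg (mt reachable_and_dist_le_iff_edist_le.mpr h)]
end

section
/- Let G be a simple graph, let i and j be distinct vertices, and let G' be the graph obtained from G by adding the edge {i,j}. Let k be a vertex that is reachable from i and from j in G. If G.dist k i ≤ G.dist k j, then k is reachable from i in G' and G'.dist k i = G.dist k i. -/
open SimpleGraph

private lemma aux_walk_bound {V : Type*} (G : SimpleGraph V) (i j k : V)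
    (hki : G.Reachable k i) (hkj : G.Reachable k j)
    (h : G.dist k i ≤ G.dist k j) :
    ∀ {u v : V} (W : (G ⊔ edge i j).Walk u v), v = i → G.Reachable k u →
      G.dist k i ≤ G.dist k u + W.length := by
  intro u v W
  induction W with
  | nil => rintro rfl _; simp
  | @cons a b c hab W' ih =>
    intro hv hka
    rcases hab with hab | hab
    · have hkb : G.Reachable k b := hka.trans hab.reachable
      have h1 := ih hv hkb
      obtain ⟨P, hP⟩ := hka.exists_walk_length_eq_dist
      have h2 : G.dist k b ≤ G.dist k a + 1 := by
        have := SimpleGraph.dist_le (P.concat hab)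
        simpa [SimpleGraph.Walk.length_concat, hP] using this
      simp only [SimpleGraph.Walk.length_cons]
      omega
    · rw [edge_adj] at hab
      subst hv
      simp only [SimpleGraph.Walk.length_cons]
      rcases hab.1 with ⟨rfl, rfl⟩ | ⟨rfl, rfl⟩
      · omega
      · have h1 := ih rfl hki
        omega

/-- Edge-addition case with `Δ ≤ 0` of the local state correction rationale:
adding edge `{i,j}` does not change the shortest-path distance from `k` to `i`
when `k` is at most as far from `i` as from `j`. -/
theorem edge_addition_dist_preserved {V : Type*} (G : SimpleGraph V) (i j : V)
    (hij : i ≠ j) (k : V) (hki : G.Reachable k i) (hkj : G.Reachable k j)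
    (h : G.dist k i ≤ G.dist k j) :
    (G ⊔ edge i j).Reachable k i ∧ (G ⊔ edge i j).dist k i = G.dist k i := by
  have hle : G ≤ G ⊔ edge i j := le_sup_left
  have hreach : (G ⊔ edge i j).Reachable k i := hki.mono hle
  refine ⟨hreach, le_antisymm ?_ ?_⟩
  · obtain ⟨W, hW⟩ := hki.exists_walk_length_eq_dist
    calc (G ⊔ edge i j).dist k i ≤ (W.mapLe hle).length := dist_le _
      _ = G.dist k i := by simp [hW]
  · obtain ⟨W, hW⟩ := hreach.exists_walk_length_eq_dist
    have := aux_walk_bound G i j k hki hkj h W rfl (Reachable.refl k)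
    simpa [hW, SimpleGraph.dist_self] using this
end

section
/- Let G be a simple graph, let i and j be distinct vertices, and let G' be the graph obtained from G by adding the edge {i,j}. Let k be a vertex that is reachable from i and from j in G. Then k is reachable from i in G' and G'.dist k i = min (G.dist k i) (G.dist k j + 1). -/
open SimpleGraph

private lemma dist_triangle_reach {V : Type*} {G : SimpleGraph V} {a b c : V}
    (hab : G.Reachable a b) (hbc : G.Reachable b c) :
    G.dist a c ≤ G.dist a b + G.dist b c := by
  obtain ⟨p, hp⟩ := hab.exists_walk_length_eq_dist
  obtain ⟨q, hq⟩ := hbc.exists_walk_length_eq_dist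
  calc G.dist a c ≤ (p.append q).length := SimpleGraph.dist_le _
    _ = G.dist a b + G.dist b c := by rw [SimpleGraph.Walk.length_append, hp, hq]

private lemma lower_bound {V : Type*} {G : SimpleGraph V} {i j : V} :
    ∀ {a c : V} (p : (G ⊔ edge i j).Walk a c), c = i → G.Reachable a i → G.Reachable a j →
      min (G.dist a i) (G.dist a j + 1) ≤ p.length := by
  intro a c p
  induction p with
  | nil =>
    rintro rfl _ _
    simp
  | @cons x y _ h q ih =>
    intro hc hai haj
    subst hc
    rcases h with h | h
    · -- edge of G
      have hyi := (h.reachable).symm.trans hai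
      have hyj := (h.reachable).symm.trans haj
      have hib := ih rfl hyi hyj
      have hd1 : G.dist x y = 1 := (SimpleGraph.dist_eq_one_iff_adj).2 h
      have h1 := dist_triangle_reach h.reachable hyi
      have h2 := dist_triangle_reach h.reachable hyj
      simp only [SimpleGraph.Walk.length_cons]
      omega
    · rw [SimpleGraph.edge_adj] at h
      have h0 : G.dist x x = 0 := by simp
      rcases h.1 with ⟨rfl, rfl⟩ | ⟨rfl, rfl⟩ <;>
        · simp only [SimpleGraph.Walk.length_cons]
          omega

/-- Distance formula for edge addition: after adding edge `{i,j}`, the shortest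
distance from `k` to `i` is the minimum of the old distance and the distance via
the new edge. -/
theorem edge_addition_dist_formula {V : Type*} (G : SimpleGraph V) (i j : V)
    (hij : i ≠ j) (k : V) (hki : G.Reachable k i) (hkj : G.Reachable k j) :
    (G ⊔ edge i j).Reachable k i ∧
      (G ⊔ edge i j).dist k i = min (G.dist k i) (G.dist k j + 1) := by
  have hle : G ≤ G ⊔ edge i j := le_sup_left
  have hreach : (G ⊔ edge i j).Reachable k i := hki.mono hle
  refine ⟨hreach, le_antisymm ?_ ?_⟩
  · apply le_min
    · obtain ⟨p, hp⟩ := hki.exists_walk_length_eq_dist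
      calc (G ⊔ edge i j).dist k i ≤ (p.mapLe hle).length := SimpleGraph.dist_le _
        _ = G.dist k i := by simpa using hp
    · obtain ⟨p, hp⟩ := hkj.exists_walk_length_eq_dist
      have hadj : (G ⊔ edge i j).Adj j i := Or.inr ((edge_adj i j j i).2 ⟨.inr ⟨rfl, rfl⟩, hij.symm⟩)
      calc (G ⊔ edge i j).dist k i ≤ ((p.mapLe hle).concat hadj).length :=
            SimpleGraph.dist_le _
        _ = G.dist k j + 1 := by simp [SimpleGraph.Walk.length_concat, hp]
  · obtain ⟨p, hp⟩ := hreach.exists_walk_length_eq_dist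
    calc min (G.dist k i) (G.dist k j + 1) ≤ p.length := lower_bound p rfl hki hkj
      _ = (G ⊔ edge i j).dist k i := hp
end

section
/- Let G be a simple graph with adjacent vertices i and j, and let G' be the graph obtained from G by deleting the edge {i,j}. Let k be a vertex that is reachable from i in G. If G.dist k i ≤ G.dist k j, then k is reachable from i in G' and G'.dist k i = G.dist k i. -/
open SimpleGraph

private lemma aux_walk {V : Type*} (G : SimpleGraph V) (i j : V)
    (hadj : G.Adj i j) :
    ∀ (n : ℕ) (k : V), G.Reachable k i → G.dist k i ≤ G.dist k j →
      G.dist k i = n →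
      ∃ p : (G.deleteEdges {s(i, j)}).Walk k i, p.length = n := by
  intro n
  induction n with
  | zero =>
    intro k hki _ hd
    have : k = i := (SimpleGraph.dist_eq_zero_iff_eq_or_not_reachable.mp hd).resolve_right
      (fun hn => hn hki)
    subst this
    exact ⟨SimpleGraph.Walk.nil, rfl⟩
  | succ n ih =>
    intro k hki hle hd
    obtain ⟨p, hp⟩ := hki.exists_walk_length_eq_dist
    rw [hd] at hp
    cases p with
    | nil => simp at hp
    | @cons _ k' _ hkk' q =>
      -- dist k' i = n
      have hqlen : q.length = n := by simpa using hp
      have hk'i_le : G.dist k' i ≤ n := hqlen ▸ SimpleGraph.dist_le q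
      have hk'i_reach : G.Reachable k' i := ⟨q⟩
      obtain ⟨q0, hq0⟩ := hk'i_reach.exists_walk_length_eq_dist
      have h1 : G.dist k i ≤ (SimpleGraph.Walk.cons hkk' q0).length :=
        SimpleGraph.dist_le _
      have hge : n ≤ G.dist k' i := by
        simp only [SimpleGraph.Walk.length_cons, hq0, hd] at h1
        omega
      have hk'i : G.dist k' i = n := le_antisymm hk'i_le hge
      -- dist k' i ≤ dist k' j
      have hk'j_reach : G.Reachable k' j := hk'i_reach.trans hadj.reachable
      obtain ⟨w, hw⟩ := hk'j_reach.exists_walk_length_eq_dist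
      have htri : G.dist k j ≤ G.dist k' j + 1 := by
        have := SimpleGraph.dist_le (SimpleGraph.Walk.cons hkk' w)
        simpa [hw] using this
      have hle' : G.dist k' i ≤ G.dist k' j := by omega
      -- the edge {k,k'} is not {i,j}
      have hne : s(k, k') ≠ s(i, j) := by
        intro heq
        rw [Sym2.eq_iff] at heq
        rcases heq with ⟨hk, hk'⟩ | ⟨hk, hk'⟩
        · subst hk
          simp [SimpleGraph.dist_self] at hd
        · subst hk; subst hk'
          rw [SimpleGraph.dist_self] at hk'i hle
          omega
      obtain ⟨q', hq'⟩ := ih k' hk'i_reach hle' hk'i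
      have hadj' : (G.deleteEdges {s(i, j)}).Adj k k' := by
        rw [SimpleGraph.deleteEdges_adj]
        exact ⟨hkk', hne⟩
      exact ⟨SimpleGraph.Walk.cons hadj' q', by simp [hq']⟩

/-- Edge-deletion case with `Δ ≤ 0` of the local state correction rationale:
if `k` is at most as far from `i` as from `j`, then no shortest path from `k`
to `i` uses the edge `{i,j}`, so deleting it preserves reachability and distance. -/
theorem edge_deletion_dist_preserved {V : Type*} (G : SimpleGraph V) (i j : V)
    (hadj : G.Adj i j) (k : V) (hki : G.Reachable k i)
    (h : G.dist k i ≤ G.dist k j) :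
    (G.deleteEdges {s(i, j)}).Reachable k i ∧
      (G.deleteEdges {s(i, j)}).dist k i = G.dist k i := by
  obtain ⟨p, hp⟩ := aux_walk G i j hadj (G.dist k i) k hki h rfl
  have hreach : (G.deleteEdges {s(i, j)}).Reachable k i := ⟨p⟩
  refine ⟨hreach, le_antisymm (hp ▸ SimpleGraph.dist_le p) ?_⟩
  obtain ⟨p', hp'⟩ := hreach.exists_walk_length_eq_dist
  calc G.dist k i ≤ (p'.mapLe (G.deleteEdges_le {s(i, j)})).length :=
        SimpleGraph.dist_le _
    _ = (G.deleteEdges {s(i, j)}).dist k i := by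
        rw [SimpleGraph.Walk.length_map, hp']
end

section
/- Let G be a connected simple graph on a finite vertex set V, let i ∈ V, and let j, k be neighbors of i. Suppose there exists p ∈ V with p ∉ {i} ∪ N(i) such that G.dist j p ≤ G.dist i p and G.dist k p ≤ G.dist i p. Then j and k are reachable from each other in the induced subgraph of G on V \ {i}. -/
open SimpleGraph

lemma walk_reachable_induce {V : Type*} (G : SimpleGraph V) (s : Set V) {a b : V}
    (W : G.Walk a b) (h : ∀ v ∈ W.support, v ∈ s) :
    (G.induce s).Reachable ⟨a, h a W.start_mem_support⟩ ⟨b, h b W.end_mem_support⟩ := by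
  induction W with
  | nil => rfl
  | @cons u v w hadj W ih =>
    have hu : u ∈ s := h u (by simp)
    have hv : v ∈ s := h v (by simp)
    have h' : ∀ x ∈ W.support, x ∈ s := fun x hx => h x (by simp [hx])
    exact (SimpleGraph.Adj.reachable (by exact hadj : (G.induce s).Adj ⟨u, hu⟩ ⟨v, hv⟩)).trans
      (ih h')

lemma reach_ext {V : Type*} [DecidableEq V] (G : SimpleGraph V) (hG : G.Connected) (i j p : V)
    (hj : G.Adj i j) (hp : p ≠ i) (hd : G.dist j p ≤ G.dist i p) :
    (G.induce {v : V | v ≠ i}).Reachable ⟨j, hj.ne'⟩ ⟨p, hp⟩ := by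
  obtain ⟨W, hW⟩ := hG.exists_walk_length_eq_dist j p
  have hiW : i ∉ W.support := by
    intro hmem
    have h1 : (W.takeUntil i hmem).length + (W.dropUntil i hmem).length = W.length := by
      rw [← SimpleGraph.Walk.length_append, SimpleGraph.Walk.take_spec]
    have h2 : G.dist j i ≤ (W.takeUntil i hmem).length := SimpleGraph.dist_le _
    have h3 : G.dist i p ≤ (W.dropUntil i hmem).length := SimpleGraph.dist_le _
    have h4 : 0 < G.dist j i := hG.pos_dist_of_ne hj.ne'
    omega
  exact walk_reachable_induce G {v : V | v ≠ i} W
    (fun v hv => by simp only [Set.mem_setOf_eq]; rintro rfl; exact hiW hv)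

/-- Sufficiency of the second membership condition of `P_i`: two neighbors `j, k`
of `i` that are both no farther than `i` from some node `p` outside the closed
neighborhood of `i` remain connected after removing `i`. -/
theorem neighbors_connected_via_external {V : Type*} [Fintype V] [DecidableEq V]
    (G : SimpleGraph V) (hG : G.Connected) (i j k : V)
    (hj : G.Adj i j) (hk : G.Adj i k)
    (hext : ∃ p : V, p ≠ i ∧ ¬ G.Adj i p ∧
      G.dist j p ≤ G.dist i p ∧ G.dist k p ≤ G.dist i p) :
    (G.induce {v : V | v ≠ i}).Reachable ⟨j, hj.ne'⟩ ⟨k, hk.ne'⟩ := by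
  obtain ⟨p, hpi, _, hdj, hdk⟩ := hext
  exact (reach_ext G hG i j p hj hpi hdj).trans (reach_ext G hG i k p hk hpi hdk).symm
end
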